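/- Suppose each base model is linear in a latent feature map: there exist a map φ : 𝒳* → ℝ^d and, for each θ ∈ Θ and i ∈ 𝒱, a vector ψ_{θ,i} ∈ ℝ^d such that P_θ(i|X) = ⟨ψ_{θ,i}, φ(X)⟩ for all X ∈ 𝒳* (the paper's setting with the injective link function g taken to be the identity). If the set {Σ_{X̃∈𝒳*} T(X̃|X)·φ(X̃) : X ∈ 𝒳} spans ℝ^d, then for any θ, θ' ∈ Θ with TV_X(P^perturb_θ, P^perturb_{θ'}) = 0 for all X ∈ 𝒳, one has ψ_{θ,i} = ψ_{θ',i} for every i ∈ 𝒱, hence P_θ(·|X) = P_{θ'}(·|X) for every X ∈ 𝒳*; consequently the perturbation cost ℰ_{T,𝒫^base,δ} equals zero for every δ > 0. -/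
import Mathlib


open Finset

/-- Total variation distance between two real-valued functions on a finite set. -/
noncomputable def tvDist {V : Type*} [Fintype V] (p q : V → ℝ) : ℝ :=
  (1 / 2) * ∑ i, |p i - q i|

/-- Distance from a prefix to the (nonempty, finite) training support. -/
noncomputable def distToSupp {Xs : Type*} (M : Xs → Xs → ℝ)
    (supp : Finset Xs) (h : supp.Nonempty) (X : Xs) : ℝ :=
  supp.inf' h fun X₀ => M X X₀

/-- The perturbed model: first perturb the prefix via the kernel `T`, then apply `P`. -/
noncomputable def perturbedModel {Θ Xs V : Type*} [Fintype Xs]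
    (T : Xs → Xs → ℝ) (P : Θ → Xs → V → ℝ) (θ : Θ) (X : Xs) (i : V) : ℝ :=
  ∑ Xt, T X Xt * P θ Xt i

/-- Extrapolation uncertainty of the model class `{P θ : θ ∈ Θ}` at level `δ`. -/
noncomputable def extrapUncertainty {Θ Xs V : Type*} [Fintype V]
    (M : Xs → Xs → ℝ) (supp : Finset Xs) (h : supp.Nonempty)
    (P : Θ → Xs → V → ℝ) (δ : ℝ) : ℝ :=
  sSup { r | ∃ X' θ θ',
    distToSupp M supp h X' ≤ δ ∧
    (∀ X ∈ supp, tvDist (P θ X) (P θ' X) = 0) ∧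
    r = tvDist (P θ X') (P θ' X') }

/-- The perturbation cost `ℰ_{T,𝒫^base,δ}`. -/
noncomputable def perturbCost {Θ Xs V : Type*} [Fintype Xs] [Fintype V]
    (M : Xs → Xs → ℝ) (supp : Finset Xs) (h : supp.Nonempty)
    (T : Xs → Xs → ℝ) (P : Θ → Xs → V → ℝ) (δ : ℝ) : ℝ :=
  sSup { r | ∃ X' Xstar θ θ',
    distToSupp M supp h X' ≤ δ ∧ 0 < T X' Xstar ∧
    (∀ X ∈ supp, tvDist (perturbedModel T P θ X) (perturbedModel T P θ' X) = 0) ∧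
    r = sInf { s | ∃ θ₀ θ₀',
      (∀ X ∈ supp, tvDist (P θ₀ X) (P θ₀' X) = 0) ∧
      s = tvDist (fun i => P θ Xstar i - P θ₀ Xstar i)
                 (fun i => P θ' Xstar i - P θ₀' Xstar i) } }


lemma tvDist_eq_zero_iff {V : Type*} [Fintype V] (p q : V → ℝ) :
    tvDist p q = 0 ↔ ∀ i, p i = q i := by
  unfold tvDist
  rw [mul_eq_zero]
  constructor
  · rintro (h | h) i
    · norm_num at h
    · have h1 := (Finset.sum_eq_zero_iff_of_nonneg (fun i _ => abs_nonneg _)).1 h i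
        (Finset.mem_univ i)
    
      have h2 := abs_eq_zero.1 h1
      linarith
  · intro h
    right
    exact Finset.sum_eq_zero fun i _ => by rw [h i]; simp

lemma tvDist_nonneg {V : Type*} [Fintype V] (p q : V → ℝ) : 0 ≤ tvDist p q := by
  unfold tvDist
  positivity

/-- **Feature-map setting.** Suppose each base model is linear in a latent
feature map: `P θ X i = ⟨ψ θ i, φ X⟩`. If the expected perturbed features
`{Σ_{Xt} T(Xt|X)·φ(Xt) : X ∈ 𝒳}` span `ℝ^d`, then any two parameters whose perturbed models
agree (in TV) on the support have equal coefficient vectors and equal base models everywhere;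
consequently the perturbation cost is zero for every `δ > 0`. -/
theorem perturbCost_eq_zero_of_feature_map
    {Θ Xs V : Type*} [Fintype Xs] [Nonempty Xs] [Fintype V] [Nonempty V]
    (M : Xs → Xs → ℝ) (supp : Finset Xs) (hsupp : supp.Nonempty)
    (T : Xs → Xs → ℝ) (hT : ∀ X, (∀ Y, 0 ≤ T X Y) ∧ ∑ Y, T X Y = 1)
    (P : Θ → Xs → V → ℝ) (hP : ∀ θ X, (∀ i, 0 ≤ P θ X i) ∧ ∑ i, P θ X i = 1)
    (d : ℕ) (φ : Xs → (Fin d → ℝ)) (ψ : Θ → V → (Fin d → ℝ))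
    (hlin : ∀ θ X i, P θ X i = ∑ k, ψ θ i k * φ X k)
    (hspan : Submodule.span ℝ
        { w : Fin d → ℝ | ∃ X ∈ supp, w = fun k => ∑ Xt, T X Xt * φ Xt k } = ⊤) :
    (∀ θ θ' : Θ,
      (∀ X ∈ supp, tvDist (perturbedModel T P θ X) (perturbedModel T P θ' X) = 0) →
      (∀ i, ψ θ i = ψ θ' i) ∧ ∀ X, P θ X = P θ' X) ∧
    (∀ δ : ℝ, 0 < δ → perturbCost M supp hsupp T P δ = 0) := by
  have key : ∀ θ θ' : Θ,
      (∀ X ∈ supp, tvDist (perturbedModel T P θ X) (perturbedModel T P θ' X) = 0) →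
      (∀ i, ψ θ i = ψ θ' i) ∧ ∀ X, P θ X = P θ' X := by
    intro θ θ' hagree
    have hpsi : ∀ i, ψ θ i = ψ θ' i := by
      intro i
      set v : Fin d → ℝ := fun k => ψ θ i k - ψ θ' i k with hv
      have epert : ∀ (θ₁ : Θ) (X : Xs), perturbedModel T P θ₁ X i
          = ∑ k, ψ θ₁ i k * ∑ Xt, T X Xt * φ Xt k := by
        intro θ₁ X
        unfold perturbedModel
        calc ∑ Xt, T X Xt * P θ₁ Xt i
            = ∑ Xt, ∑ k, ψ θ₁ i k * (T X Xt * φ Xt k) := by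
              refine Finset.sum_congr rfl fun Xt _ => ?_
              rw [hlin, Finset.mul_sum]
              exact Finset.sum_congr rfl fun k _ => by ring
          _ = ∑ k, ∑ Xt, ψ θ₁ i k * (T X Xt * φ Xt k) := Finset.sum_comm
          _ = ∑ k, ψ θ₁ i k * ∑ Xt, T X Xt * φ Xt k := by
              refine Finset.sum_congr rfl fun k _ => ?_
              rw [Finset.mul_sum]
      have hgen : ∀ w ∈ { w : Fin d → ℝ | ∃ X ∈ supp, w = fun k => ∑ Xt, T X Xt * φ Xt k },
          ∑ k, v k * w k = 0 := by
        rintro w ⟨X, hX, rfl⟩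
        have h1 := (tvDist_eq_zero_iff _ _).1 (hagree X hX) i
        rw [epert θ X, epert θ' X] at h1
        have : ∑ k, v k * ∑ Xt, T X Xt * φ Xt k
            = (∑ k, ψ θ i k * ∑ Xt, T X Xt * φ Xt k)
              - ∑ k, ψ θ' i k * ∑ Xt, T X Xt * φ Xt k := by
          rw [← Finset.sum_sub_distrib]
          exact Finset.sum_congr rfl fun k _ => by simp [hv, sub_mul]
        rw [this, h1, sub_self]
      let f : (Fin d → ℝ) →ₗ[ℝ] ℝ :=
        { toFun := fun u => ∑ k, v k * u k
          map_add' := by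
            intro a b
            simp [mul_add, Finset.sum_add_distrib]
          map_smul' := by
            intro c a
            simp only [smul_eq_mul, RingHom.id_apply, Pi.smul_apply]
            rw [Finset.mul_sum]
            exact Finset.sum_congr rfl fun k _ => by ring }
      have hker : Submodule.span ℝ
          { w : Fin d → ℝ | ∃ X ∈ supp, w = fun k => ∑ Xt, T X Xt * φ Xt k }
          ≤ LinearMap.ker f := Submodule.span_le.2 fun w hw => hgen w hw
      have hfv : f v = 0 := hker (hspan ▸ Submodule.mem_top)
      have hvv : ∑ k, v k * v k = 0 := hfv
      have hz : ∀ k : Fin d, v k = 0 := by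
        intro k
        have := (Finset.sum_eq_zero_iff_of_nonneg
          (fun k _ => mul_self_nonneg (v k))).1 hvv k (Finset.mem_univ k)
        exact mul_self_eq_zero.1 this
      funext k
      have := hz k
      simp only [hv] at this
      linarith
    refine ⟨hpsi, fun X => ?_⟩
    funext i
    rw [hlin, hlin, hpsi i]
  refine ⟨key, fun δ hδ => ?_⟩
  unfold perturbCost
  have hsub : { r | ∃ X' Xstar θ θ',
      distToSupp M supp hsupp X' ≤ δ ∧ 0 < T X' Xstar ∧
      (∀ X ∈ supp, tvDist (perturbedModel T P θ X) (perturbedModel T P θ' X) = 0) ∧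
      r = sInf { s | ∃ θ₀ θ₀',
        (∀ X ∈ supp, tvDist (P θ₀ X) (P θ₀' X) = 0) ∧
        s = tvDist (fun i => P θ Xstar i - P θ₀ Xstar i)
                   (fun i => P θ' Xstar i - P θ₀' Xstar i) } } ⊆ {0} := by
    rintro r ⟨X', Xstar, θ, θ', hd, hTpos, hagree, rfl⟩
    have hPeq := (key θ θ' hagree).2
    have h0 : (0 : ℝ) ∈ { s | ∃ θ₀ θ₀',
        (∀ X ∈ supp, tvDist (P θ₀ X) (P θ₀' X) = 0) ∧
        s = tvDist (fun i => P θ Xstar i - P θ₀ Xstar i)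
                   (fun i => P θ' Xstar i - P θ₀' Xstar i) } := by
      refine ⟨θ, θ', fun X _ => (tvDist_eq_zero_iff _ _).2 fun i => by rw [hPeq X], ?_⟩
      simp [tvDist, hPeq Xstar]
    have hlb : ∀ s ∈ { s | ∃ θ₀ θ₀',
        (∀ X ∈ supp, tvDist (P θ₀ X) (P θ₀' X) = 0) ∧
        s = tvDist (fun i => P θ Xstar i - P θ₀ Xstar i)
                   (fun i => P θ' Xstar i - P θ₀' Xstar i) }, (0 : ℝ) ≤ s := by
      rintro s ⟨θ₀, θ₀', _, rfl⟩
      exact tvDist_nonneg _ _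
    have : sInf { s | ∃ θ₀ θ₀',
        (∀ X ∈ supp, tvDist (P θ₀ X) (P θ₀' X) = 0) ∧
        s = tvDist (fun i => P θ Xstar i - P θ₀ Xstar i)
                   (fun i => P θ' Xstar i - P θ₀' Xstar i) } = 0 :=
      le_antisymm (csInf_le ⟨0, hlb⟩ h0) (le_csInf ⟨0, h0⟩ hlb)
    simpa using this
  rcases Set.subset_singleton_iff_eq.1 hsub with h | h
  · rw [h]; exact Real.sSup_empty
  · rw [h]; exact csSup_singleton 0
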